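/- For 0 < p ≤ 1/2 and 0 < D < 1/2, H(p ∗ D) > H(D) whenever D < p, where H is the binary entropy function; consequently the binary Wyner–Ziv rate R₁⋆ = H(p ∗ D) − H(D) is strictly positive for 0 < D < p ≤ 1/2. -/

import Mathlib

def binConv (p q : ℝ) : ℝ := p * (1 - q) + q * (1 - p)

/-- Binary entropy function (base 2), with `H 0 = H 1 = 0`. -/
noncomputable def binH (x : ℝ) : ℝ := -x * Real.logb 2 x - (1 - x) * Real.logb 2 (1 - x)

/-! Convolving with noise of crossover `p ∈ (0, 1/2]` moves `D ∈ (0, 1/2)` strictly closer to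
`1/2`, since `p ∗ D - D = p (1 - 2D)` and `1/2 - p ∗ D = (1 - 2p)(1 - 2D)/2`; and `H` is strictly
increasing on `[0, 1/2]`. -/

open Set

lemma binH_eq_binEntropy_div_log_two (x : ℝ) : binH x = Real.binEntropy x / Real.log 2 := by
  simp only [binH, Real.binEntropy, Real.logb, Real.log_inv]
  ring

lemma binH_strictMonoOn : StrictMonoOn binH (Icc 0 (1 / 2)) := by
  intro x hx y hy hxy
  rw [binH_eq_binEntropy_div_log_two, binH_eq_binEntropy_div_log_two]
  rw [one_div] at hx hy
  exact div_lt_div_of_pos_right (Real.binEntropy_strictMonoOn hx hy hxy)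
    (Real.log_pos one_lt_two)

lemma binConv_sub_self_right (p q : ℝ) : binConv p q - q = p * (1 - 2 * q) := by
  unfold binConv; ring

lemma half_sub_binConv (p q : ℝ) : 1 / 2 - binConv p q = (1 - 2 * p) * (1 - 2 * q) / 2 := by
  unfold binConv; ring

lemma lt_binConv {p q : ℝ} (hp : 0 < p) (hq : q < 1 / 2) : q < binConv p q := by
  have : 0 < p * (1 - 2 * q) := mul_pos hp (by linarith)
  linarith [binConv_sub_self_right p q]

lemma binConv_le_half {p q : ℝ} (hp : p ≤ 1 / 2) (hq : q ≤ 1 / 2) : binConv p q ≤ 1 / 2 := by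
  have : 0 ≤ (1 - 2 * p) * (1 - 2 * q) := mul_nonneg (by linarith) (by linarith)
  linarith [half_sub_binConv p q]

theorem binH_conv_gt_general (p D : ℝ) (hp0 : 0 < p) (hp : p ≤ 1/2)
    (hD0 : 0 < D) (hD : D < 1/2) :
    binH (binConv p D) > binH D ∧ 0 < binH (binConv p D) - binH D := by
  have hDconv : D < binConv p D := lt_binConv hp0 hD
  have key : binH D < binH (binConv p D) :=
    binH_strictMonoOn ⟨hD0.le, hD.le⟩ ⟨by linarith, binConv_le_half hp hD.le⟩ hDconv
  exact ⟨key, sub_pos.mpr key⟩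

theorem binH_conv_gt (p D : ℝ) (hp0 : 0 < p) (hp : p ≤ 1/2)
    (hD0 : 0 < D) (hD : D < 1/2) (hDp : D < p) :
    binH (binConv p D) > binH D ∧ 0 < binH (binConv p D) - binH D :=
  binH_conv_gt_general p D hp0 hp hD0 hD
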